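/- Let A be a dendriform algebra over a field F of characteristic zero and let X ⊆ A. Then the dendriform subalgebra of A generated by X (the smallest F-subspace of A containing X and closed under ≺ and ≻) is spanned, as an F-vector space, by the evaluations in A of normal tree monomials on X: planar binary trees whose leaves are labeled by elements of X, whose internal nodes are labeled by {≺, ≻}, and whose only allowed left-growth pattern is (≻, ≺), i.e., whenever the left child w of an internal node v is itself an internal node, then v is labeled ≻ and w is labeled ≺. -/

import Mathlib

/-- Operation labels `≺` (prec) and `≻` (succ). -/
inductive DendOp where
  | prec
  | succ
deriving DecidableEq

/-- Planar (full) binary trees with internal nodes labeled by `DendOp` and leaves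
labeled by elements of `A`. -/
inductive DTree (A : Type*) where
  | leaf : A → DTree A
  | node : DendOp → DTree A → DTree A → DTree A

/-- Evaluation of a labeled tree in `A` using operations `p` (for `≺`) and `s` (for `≻`). -/
def DTree.eval {A : Type*} (p s : A → A → A) : DTree A → A
  | .leaf x => x
  | .node DendOp.prec l r => p (l.eval p s) (r.eval p s)
  | .node DendOp.succ l r => s (l.eval p s) (r.eval p s)

/-- All leaf labels of the tree lie in `X`. -/
def DTree.leavesIn {A : Type*} (X : Set A) : DTree A → Prop
  | .leaf x => x ∈ X
  | .node _ l r => l.leavesIn X ∧ r.leavesIn X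

/-- Normality: the only allowed left-growth pattern is `(≻, ≺)`. -/
def DTree.normal {A : Type*} : DTree A → Prop
  | .leaf _ => True
  | .node _ (.leaf _) r => r.normal
  | .node op (.node q a b) r =>
      op = DendOp.succ ∧ q = DendOp.prec ∧ (DTree.node q a b).normal ∧ r.normal

/-!
Read from left to right, the three axioms rewrite a product whose left factor normality forbids:
`(a ≻ b) ≺ u = a ≻ (b ≺ u)`, `(x ≺ b) ≺ u = x ≺ (b ≺ u) + x ≺ (b ≻ u)` and
`(a ≻ b) ≻ u = a ≻ (b ≻ u) - (a ≺ b) ≻ u`. The inner products `b ≺ u`, `b ≻ u` and `a ≺ b` have a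
proper subtree of the left factor on their left, so by induction on that factor they lie in the
span of normal monomials, and `a ≺ b` even in the span of the leaves and `≺`-rooted ones, which
may stand to the left of a `≻`. So the span of the normal monomials is closed under both
operations; it contains `X` and lies in every closed subspace containing `X`.
-/

namespace DTree

variable {A : Type*}

def precOrLeaf : DTree A → Prop
  | .node .succ _ _ => False
  | _ => True

theorem normal_node {op : DendOp} {a b : DTree A} (h : (node op a b).normal) :
    a.normal ∧ b.normal ∧ a.precOrLeaf := by
  cases a with
  | leaf => exact ⟨trivial, h, trivial⟩
  | node q c d =>
    obtain ⟨-, rfl, hl, hr⟩ := h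
    exact ⟨hl, hr, trivial⟩

theorem exists_eq_leaf_of_normal_prec {a b : DTree A} (h : (node .prec a b).normal) :
    ∃ x, a = leaf x := by
  cases a with
  | leaf x => exact ⟨x, rfl⟩
  | node => exact absurd h.1 DendOp.noConfusion

theorem normal_succ {a b : DTree A} (ha : a.normal) (ha' : a.precOrLeaf) (hb : b.normal) :
    (node .succ a b).normal := by
  cases a with
  | leaf => exact hb
  | node q =>
    cases q with
    | prec => exact ⟨rfl, rfl, ha, hb⟩
    | succ => exact ha'.elim

theorem eval_mem {p s : A → A → A} {X S : Set A} (hX : X ⊆ S)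
    (hp : ∀ a ∈ S, ∀ b ∈ S, p a b ∈ S) (hs : ∀ a ∈ S, ∀ b ∈ S, s a b ∈ S) :
    ∀ t : DTree A, t.leavesIn X → t.eval p s ∈ S
  | leaf _, ht => hX ht
  | node .prec l r, ht => hp _ (eval_mem hX hp hs l ht.1) _ (eval_mem hX hp hs r ht.2)
  | node .succ l r, ht => hs _ (eval_mem hX hp hs l ht.1) _ (eval_mem hX hp hs r ht.2)

end DTree

theorem Submodule.apply_mem_of_mem_span {R M N : Type*} [Semiring R] [AddCommMonoid M]
    [AddCommMonoid N] [Module R M] [Module R N] (f : M →ₗ[R] N) {s : Set M} {p : Submodule R N}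
    (h : ∀ a ∈ s, f a ∈ p) {x : M} (hx : x ∈ span R s) : f x ∈ p :=
  (span_le (p := p.comap f)).2 h hx

theorem Submodule.apply₂_mem_of_mem_span {R M N P : Type*} [CommSemiring R] [AddCommMonoid M]
    [AddCommMonoid N] [AddCommMonoid P] [Module R M] [Module R N] [Module R P]
    (f : M →ₗ[R] N →ₗ[R] P) {s : Set M} {t : Set N} {p : Submodule R P}
    (h : ∀ a ∈ s, ∀ b ∈ t, f a b ∈ p) {x : M} {y : N} (hx : x ∈ span R s) (hy : y ∈ span R t) :
    f x y ∈ p := by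
  have hxy := apply_mem_map₂ f hx hy
  rw [map₂_span_span] at hxy
  exact span_le.2 (by rintro _ ⟨a, ha, b, hb, rfl⟩; exact h a ha b hb) hxy

namespace Dendriform

open DTree Submodule

variable {R A : Type*} [CommRing R] [AddCommGroup A] [Module R A]
variable (prec succ : A →ₗ[R] A →ₗ[R] A) (X : Set A)

abbrev ev (t : DTree A) : A :=
  t.eval (fun u v => prec u v) (fun u v => succ u v)

def normalMonomials : Set A :=
  {a | ∃ t : DTree A, t.leavesIn X ∧ t.normal ∧ ev prec succ t = a}

def precOrLeafMonomials : Set A :=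
  {a | ∃ t : DTree A, t.leavesIn X ∧ t.normal ∧ t.precOrLeaf ∧ ev prec succ t = a}

local notation "S" => span R (normalMonomials prec succ X)
local notation "N" => span R (precOrLeafMonomials prec succ X)

variable {prec succ X}

theorem span_precOrLeafMonomials_le : N ≤ S :=
  span_mono fun _ ⟨t, ht, htn, _, he⟩ => ⟨t, ht, htn, he⟩

theorem succ_left_mem_span {a : DTree A} (ha : a.leavesIn X) (han : a.normal)
    (ha' : a.precOrLeaf) {w : A} (hw : w ∈ S) : succ (ev prec succ a) w ∈ S :=
  apply_mem_of_mem_span _ (by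
    rintro _ ⟨v, hv, hvn, rfl⟩
    exact subset_span ⟨.node .succ a v, ⟨ha, hv⟩, normal_succ han ha' hvn, rfl⟩) hw

theorem succ_right_mem_span {u : DTree A} (hu : u.leavesIn X) (hun : u.normal)
    {w : A} (hw : w ∈ N) : succ w (ev prec succ u) ∈ S :=
  apply_mem_of_mem_span (succ.flip (ev prec succ u)) (by
    rintro _ ⟨v, hv, hvn, hv', rfl⟩
    exact subset_span ⟨.node .succ v u, ⟨hv, hu⟩, normal_succ hvn hv' hun, rfl⟩) hw

theorem prec_leaf_mem_span {x : A} (hx : x ∈ X) {w : A} (hw : w ∈ S) : prec x w ∈ N :=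
  apply_mem_of_mem_span _ (by
    rintro _ ⟨v, hv, hvn, rfl⟩
    exact subset_span ⟨.node .prec (.leaf x) v, ⟨hx, hv⟩, hvn, trivial, rfl⟩) hw

variable (h1 : ∀ x y z : A, prec (succ x y) z = succ x (prec y z))
  (h2 : ∀ x y z : A, prec (prec x y) z = prec x (prec y z) + prec x (succ y z))
  (h3 : ∀ x y z : A, succ x (succ y z) = succ (prec x y) z + succ (succ x y) z)
include h1 h2 h3

theorem normal_products_mem_span (t : DTree A) (ht : t.leavesIn X) (htn : t.normal)
    {u : DTree A} (hu : u.leavesIn X) (hun : u.normal) :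
    (t.precOrLeaf → prec (ev prec succ t) (ev prec succ u) ∈ N) ∧
      prec (ev prec succ t) (ev prec succ u) ∈ S ∧
      succ (ev prec succ t) (ev prec succ u) ∈ S := by
  induction t generalizing u with
  | leaf x =>
    have hp : prec x (ev prec succ u) ∈ N :=
      subset_span ⟨.node .prec (.leaf x) u, ⟨ht, hu⟩, hun, trivial, rfl⟩
    exact ⟨fun _ => hp, span_precOrLeafMonomials_le hp,
      subset_span ⟨.node .succ (.leaf x) u, ⟨ht, hu⟩, hun, rfl⟩⟩
  | node op a b iha ihb =>
    obtain ⟨han, hbn, ha'⟩ := normal_node htn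
    obtain ⟨-, hbu_prec, hbu_succ⟩ := ihb ht.2 hbn hu hun
    cases op with
    | prec =>
      obtain ⟨x, rfl⟩ := exists_eq_leaf_of_normal_prec htn
      have hp : prec (prec x (ev prec succ b)) (ev prec succ u) ∈ N := by
        rw [h2]
        exact add_mem (prec_leaf_mem_span ht.1 hbu_prec) (prec_leaf_mem_span ht.1 hbu_succ)
      exact ⟨fun _ => hp, span_precOrLeafMonomials_le hp,
        subset_span ⟨.node .succ (.node .prec (.leaf x) b) u, ⟨ht, hu⟩,
          normal_succ htn trivial hun, rfl⟩⟩
    | succ =>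
      refine ⟨False.elim, ?_, ?_⟩
      · show prec (succ _ _) _ ∈ S
        rw [h1]
        exact succ_left_mem_span ht.1 han ha' hbu_prec
      · show succ (succ _ _) _ ∈ S
        rw [eq_sub_of_add_eq' (h3 _ _ _).symm]
        have hab := (iha ht.1 han ht.2 hbn).1 ha'
        exact sub_mem (succ_left_mem_span ht.1 han ha' hbu_succ) (succ_right_mem_span hu hun hab)

theorem prec_mem_span_and_succ_mem_span {a b : A} (ha : a ∈ S) (hb : b ∈ S) :
    prec a b ∈ S ∧ succ a b ∈ S := by
  have hgen : ∀ c ∈ normalMonomials prec succ X, ∀ d ∈ normalMonomials prec succ X,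
      prec c d ∈ S ∧ succ c d ∈ S := by
    rintro _ ⟨t, ht, htn, rfl⟩ _ ⟨u, hu, hun, rfl⟩
    exact (normal_products_mem_span h1 h2 h3 t ht htn hu hun).2
  exact ⟨apply₂_mem_of_mem_span _ (fun c hc d hd => (hgen c hc d hd).1) ha hb,
    apply₂_mem_of_mem_span _ (fun c hc d hd => (hgen c hc d hd).2) ha hb⟩

end Dendriform

theorem dendriform_subalgebra_spanned_by_normal_monomials_general
    (F : Type*) [Field F]
    (A : Type*) [AddCommGroup A] [Module F A]
    (prec succ : A →ₗ[F] A →ₗ[F] A)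
    (h1 : ∀ x y z : A, prec (succ x y) z = succ x (prec y z))
    (h2 : ∀ x y z : A, prec (prec x y) z = prec x (prec y z) + prec x (succ y z))
    (h3 : ∀ x y z : A, succ x (succ y z) = succ (prec x y) z + succ (succ x y) z)
    (X : Set A) :
    sInf {p : Submodule F A |
        X ⊆ p ∧ ∀ a ∈ p, ∀ b ∈ p, prec a b ∈ p ∧ succ a b ∈ p} =
      Submodule.span F
        {a : A | ∃ t : DTree A, t.leavesIn X ∧ t.normal ∧
          t.eval (fun u v => prec u v) (fun u v => succ u v) = a} := by
  refine le_antisymm (sInf_le ⟨?_, fun a ha b hb => ?_⟩) (le_sInf fun p ⟨hX, hp⟩ => ?_)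
  · exact fun x hx => Submodule.subset_span ⟨.leaf x, hx, trivial, rfl⟩
  · exact Dendriform.prec_mem_span_and_succ_mem_span h1 h2 h3 ha hb
  · refine Submodule.span_le.2 fun _ ⟨t, ht, _, he⟩ => he ▸ ?_
    exact DTree.eval_mem hX (fun a ha b hb => (hp a ha b hb).1)
      (fun a ha b hb => (hp a ha b hb).2) t ht

/-- in a dendriform algebra `A` over a field of characteristic zero, the
dendriform subalgebra generated by `X ⊆ A` (the smallest subspace containing `X` and
closed under `≺` and `≻`) is spanned by the evaluations of normal tree monomials on
`X`. -/
theorem dendriform_subalgebra_spanned_by_normal_monomials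
    (F : Type*) [Field F] [CharZero F]
    (A : Type*) [AddCommGroup A] [Module F A]
    (prec succ : A →ₗ[F] A →ₗ[F] A)
    (h1 : ∀ x y z : A, prec (succ x y) z = succ x (prec y z))
    (h2 : ∀ x y z : A, prec (prec x y) z = prec x (prec y z) + prec x (succ y z))
    (h3 : ∀ x y z : A, succ x (succ y z) = succ (prec x y) z + succ (succ x y) z)
    (X : Set A) :
    sInf {p : Submodule F A |
        X ⊆ p ∧ ∀ a ∈ p, ∀ b ∈ p, prec a b ∈ p ∧ succ a b ∈ p} =
      Submodule.span F
        {a : A | ∃ t : DTree A, t.leavesIn X ∧ t.normal ∧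
          t.eval (fun u v => prec u v) (fun u v => succ u v) = a} :=
  dendriform_subalgebra_spanned_by_normal_monomials_general F A prec succ h1 h2 h3 X
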